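/- arXiv:1208.3279 — 2 statements merged into one kernel-verified Lean document; each statement's English description precedes it below -/
import Mathlib

section
/- If the maximum score max_{y'} θ(y') exceeds a threshold t, then there exists an output y such that for every clique c, the max-marginal m(y_c) of its clique restriction exceeds t. (Safe Lattices: after thresholding max-marginals at any t below the max score, a consistent unpruned global assignment always exists.) -/
/-- Max-marginal of the clique assignment `y_c`. -/
noncomputable def maxMarginal {ι S : Type*} (θ : (ι → S) → ℝ) (c : Set ι) (y : ι → S) : ℝ :=
  ⨆ y' : {y' : ι → S // ∀ i ∈ c, y' i = y i}, θ y'.1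

theorem le_maxMarginal {ι S : Type*} {θ : (ι → S) → ℝ} (hθ : BddAbove (Set.range θ))
    (c : Set ι) (y : ι → S) : θ y ≤ maxMarginal θ c y :=
  le_ciSup (f := fun y' : {y' : ι → S // ∀ i ∈ c, y' i = y i} => θ y'.1)
    (hθ.mono (Set.range_comp_subset_range _ θ)) ⟨y, fun _ _ => rfl⟩

/-- Safe Lattices: if the maximum score exceeds `t`, there exists an output `y`
all of whose clique max-marginals exceed `t`. -/
theorem safe_lattices {ι S : Type*} [Fintype ι] [Fintype S] [Nonempty S]
    (θ : (ι → S) → ℝ) (C : Set (Set ι)) (t : ℝ)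
    (h : (⨆ y' : ι → S, θ y') > t) :
    ∃ y : ι → S, ∀ c ∈ C, maxMarginal θ c y > t := by
  obtain ⟨y, hy⟩ := exists_lt_of_lt_ciSup h
  exact ⟨y, fun c _ => hy.trans_le (le_maxMarginal (Set.finite_range θ).bddAbove c y)⟩
end

section
/- For the filtering hinge objective, if the subgradient condition H(x,y;θ,α) = 0 holds (the true score beats the threshold by margin ℓ), then no clique assignment of the true output is filtered by thresholding max-marginals at τ(θ,α): m(y_c) > τ(θ,α) for all cliques c, hence the filtering loss L_f is zero. -/
theorem lt_of_hinge_eq_zero {l t s : ℝ} (hl : 0 < l) (hH : max 0 (l + t - s) = 0) : t < s := by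
  have : l + t - s ≤ 0 := hH ▸ le_max_right 0 (l + t - s)
  linarith

/-- If the hinge `H = max(0, ℓ + τ − θ(y))` is zero (the true score beats the
threshold by margin `ℓ > 0`), then no clique assignment of the true output is
filtered: all its max-marginals exceed the threshold, and the filtering loss
is zero. -/
theorem hinge_zero_no_filter {ι S : Type*} [Fintype ι] [Fintype S]
    (θ : (ι → S) → ℝ) (C : Set (Set ι)) (y : ι → S) (t l : ℝ) (hl : 0 < l)
    (hH : max 0 (l + t - θ y) = 0) :
    (∀ c ∈ C, maxMarginal θ c y > t) ∧ (if θ y ≤ t then (1:ℝ) else 0) = 0 := by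
  have hθy : t < θ y := lt_of_hinge_eq_zero hl hH
  refine ⟨fun c _ => hθy.trans_le (le_maxMarginal (Set.finite_range θ).bddAbove c y), ?_⟩
  rw [if_neg hθy.not_ge]
end
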